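/- Let $D = (x_1, \dots, x_n)$ and $D' = (x_1, \dots, x_{j-1}, x_j', x_{j+1}, \dots, x_n)$ be two datasets of points in a metric space $(M, \rho)$, all contained in a closed ball $B(m_0, r)$, differing only in the $j$-th coordinate. For any fixed point $\eta \in M$, define $\hat{F}(\eta) = \frac{1}{n}\sum_{i=1}^n \rho^2(\eta, x_i)$ and $\hat{F}'(\eta)$ analogously for $D'$. If $\eta \in B(m_0, r)$, then $|\hat{F}(\eta) - \hat{F}'(\eta)| \le 4r^2/n$. -/
import Mathlib


open Finset Metric

theorem stmt0 {M : Type*} [MetricSpace M] (n : ℕ) (hn : 0 < n)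
    (x x' : Fin n → M) (m₀ : M) (r : ℝ) (j : Fin n)
    (hdiff : ∀ i, i ≠ j → x i = x' i)
    (hx : ∀ i, x i ∈ closedBall m₀ r)
    (hx' : ∀ i, x' i ∈ closedBall m₀ r)
    (η : M) (hη : η ∈ closedBall m₀ r) :
    |(1 / n : ℝ) * ∑ i, dist η (x i) ^ 2 - (1 / n : ℝ) * ∑ i, dist η (x' i) ^ 2|
      ≤ 4 * r ^ 2 / n := by
  have hr : 0 ≤ r := le_trans dist_nonneg (mem_closedBall.mp hη)
  have key : ∑ i, dist η (x i) ^ 2 - ∑ i, dist η (x' i) ^ 2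
      = dist η (x j) ^ 2 - dist η (x' j) ^ 2 := by
    rw [← Finset.sum_sub_distrib, Finset.sum_eq_single j]
    · intro i _ hi
      rw [hdiff i hi]; ring
    · intro h; exact absurd (Finset.mem_univ j) h
  have hbnd : ∀ y : M, y ∈ closedBall m₀ r → dist η y ^ 2 ≤ 4 * r ^ 2 := by
    intro y hy
    have h1 : dist η y ≤ 2 * r := by
      calc dist η y ≤ dist η m₀ + dist m₀ y := dist_triangle _ _ _
        _ ≤ r + r := add_le_add (mem_closedBall.mp hη)
            (by rw [dist_comm]; exact mem_closedBall.mp hy)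
        _ = 2 * r := by ring
    calc dist η y ^ 2 ≤ (2 * r) ^ 2 := by
          exact pow_le_pow_left₀ dist_nonneg h1 2
      _ = 4 * r ^ 2 := by ring
  have h1 := hbnd _ (hx j)
  have h2 := hbnd _ (hx' j)
  have hd1 : (0:ℝ) ≤ dist η (x j) ^ 2 := sq_nonneg _
  have hd2 : (0:ℝ) ≤ dist η (x' j) ^ 2 := sq_nonneg _
  have habs : |dist η (x j) ^ 2 - dist η (x' j) ^ 2| ≤ 4 * r ^ 2 := by
    rw [abs_le]; constructor <;> nlinarith
  have hn' : (0:ℝ) < n := by exact_mod_cast hn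
  rw [← mul_sub, abs_mul, key, abs_of_nonneg (by positivity : (0:ℝ) ≤ 1 / n)]
  rw [div_eq_mul_inv, one_mul, mul_comm ((n:ℝ)⁻¹)]
  exact mul_le_mul_of_nonneg_right habs (by positivity)
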